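/- Suppose lim_{x→a⁺} s(x) = ∞ and μ extends continuously to x = a with a finite value μ(a). Then μ(a) ≥ 0. Moreover, if μ(a) > 0, then lim_{x→a⁺} s(x)·M[a,x] = 1/μ(a), and consequently ∫_a^{y} M[a,x] s(x) dx < ∞ for every y ∈ (a,b) (the left boundary a is an entrance boundary). -/

import Mathlib

open MeasureTheory Filter Set Topology
open scoped Classical

noncomputable section

/-- The state interval `(a, b)` where `a` is real and `b ∈ (a, ∞]`. -/
def stInt (a : ℝ) (b : EReal) : Set ℝ := {x : ℝ | a < x ∧ (x : EReal) < b}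

/-- The filter of approach to the right endpoint `b ∈ (a, ∞]`:
`atTop` when `b = ∞`, and the left-neighborhood filter of `b` otherwise. -/
def atB (b : EReal) : Filter ℝ :=
  if b = ⊤ then Filter.atTop else nhdsWithin b.toReal (Set.Iio b.toReal)

/-- The scale density `s(x) = exp(-∫_{x₀}^x 2μ/σ²)`. -/
def sDen (μ σ : ℝ → ℝ) (x₀ x : ℝ) : ℝ :=
  Real.exp (-(∫ y in x₀..x, 2 * μ y / (σ y) ^ 2))

/-- The speed density `m(x) = 2/(σ(x)² s(x))`. -/
def mDen (μ σ : ℝ → ℝ) (x₀ x : ℝ) : ℝ :=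
  2 / ((σ x) ^ 2 * sDen μ σ x₀ x)

/-- `M[a,x] = ∫_a^x m(u) du`. -/
def Mab (μ σ : ℝ → ℝ) (x₀ a x : ℝ) : ℝ :=
  ∫ u in Set.Ioo a x, mDen μ σ x₀ u

/-- The time potential `ξ(x) = ∫_{x₀}^x M[a,v] s(v) dv`. -/
def xiF (μ σ : ℝ → ℝ) (x₀ a x : ℝ) : ℝ :=
  ∫ v in x₀..x, Mab μ σ x₀ a v * sDen μ σ x₀ v

/-- The running reward potential `g(x) = ∫_{x₀}^x (∫_a^v c(u) m(u) du) s(v) dv`. -/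
def gF (μ σ c : ℝ → ℝ) (x₀ a x : ℝ) : ℝ :=
  ∫ v in x₀..x, (∫ u in Set.Ioo a v, c u * mDen μ σ x₀ u) * sDen μ σ x₀ v

/-- `h(x) = (∫_a^x (γ c(u) + p μ(u)) m(u) du) / M[a,x]`. -/
def hF (μ σ c : ℝ → ℝ) (x₀ a p γ x : ℝ) : ℝ :=
  (∫ u in Set.Ioo a x, (γ * c u + p * μ u) * mDen μ σ x₀ u) / Mab μ σ x₀ a x

/-- The long-term average reward `F(w,y)` of the `(w,y)`-impulse policy. -/
def FF (μ σ c : ℝ → ℝ) (x₀ a p K γ w y : ℝ) : ℝ :=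
  (p * (y - w) - K + γ * (gF μ σ c x₀ a y - gF μ σ c x₀ a w)) /
    (xiF μ σ x₀ a y - xiF μ σ x₀ a w)

/-- `c̄(b)`: equals `⟨c,π⟩` when `M[a,b] < ∞` and the boundary value `c(b)` otherwise. -/
def cbar (μ σ c : ℝ → ℝ) (x₀ a : ℝ) (b : EReal) (cb : ℝ) : ℝ :=
  if MeasureTheory.IntegrableOn (mDen μ σ x₀) (stInt a b) MeasureTheory.volume then
    (∫ u in stInt a b, c u * mDen μ σ x₀ u) / (∫ u in stInt a b, mDen μ σ x₀ u)
  else cb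


/-!
The scale density solves `s' = -(2μ/σ²) s`. If `μ(a) < 0`, then `s` is increasing near `a`,
so it cannot blow up at `a⁺`; hence `μ(a) ≥ 0`. If `μ(a) > 0`, write `s · M[a,·] = M[a,·] / (1/s)`:
both `M[a,x]` and `1/s(x)` vanish as `x → a⁺`, and the ratio of their derivatives is
`m / (2μ s⁻¹/σ²) = 1/μ`, so L'Hôpital's rule gives the limit `1/μ(a)`. Thus `M[a,x] s(x)` stays
bounded near `a`, and being continuous on `(a, y]` it is integrable on `(a, y)`.
-/

lemma isOpen_stInt (a : ℝ) (b : EReal) : IsOpen (stInt a b) :=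
  isOpen_Ioi.inter (isOpen_Iio.preimage continuous_coe_real_ereal)

lemma ordConnected_stInt (a : ℝ) (b : EReal) : (stInt a b).OrdConnected :=
  ⟨fun _ hx _ hz _ hu =>
    ⟨hx.1.trans_le hu.1, (EReal.coe_le_coe_iff.2 hu.2).trans_lt hz.2⟩⟩

lemma Ioc_subset_stInt {a x : ℝ} {b : EReal} (hx : x ∈ stInt a b) : Ioc a x ⊆ stInt a b :=
  fun _ hu => ⟨hu.1, (EReal.coe_le_coe_iff.2 hu.2).trans_lt hx.2⟩

lemma stInt_mem_nhdsGT {a x : ℝ} {b : EReal} (hx : x ∈ stInt a b) : stInt a b ∈ 𝓝[>] a :=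
  mem_of_superset (Ioc_mem_nhdsGT hx.1) (Ioc_subset_stInt hx)

lemma not_tendsto_atTop_nhdsGT_of_hasDerivAt_nonneg {f f' : ℝ → ℝ} {a : ℝ}
    (hf : ∀ᶠ x in 𝓝[>] a, HasDerivAt f (f' x) x) (hf' : ∀ᶠ x in 𝓝[>] a, 0 ≤ f' x) :
    ¬ Tendsto f (𝓝[>] a) atTop := by
  intro htop
  obtain ⟨c, hac, hsub⟩ := mem_nhdsGT_iff_exists_Ioc_subset.1 (hf.and hf')
  have hmono : MonotoneOn f (Ioc a c) := by
    refine monotoneOn_of_hasDerivWithinAt_nonneg (f' := f') (convex_Ioc a c)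
      (fun x hx => (hsub hx).1.continuousAt.continuousWithinAt) (fun x hx => ?_) fun x hx => ?_
    · rw [interior_Ioc] at hx
      exact (hsub (Ioo_subset_Ioc_self hx)).1.hasDerivWithinAt
    · rw [interior_Ioc] at hx
      exact (hsub (Ioo_subset_Ioc_self hx)).2
  obtain ⟨x, hfx, hx⟩ :=
    ((htop.eventually_gt_atTop (f c)).and (Ioc_mem_nhdsGT (show a < c from hac))).exists
  exact (hmono hx ⟨hac, le_rfl⟩ hx.2).not_gt hfx

lemma integrableOn_Ioo_of_continuousOn_Ioc_of_tendsto {f : ℝ → ℝ} {a y L : ℝ}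
    (hf : ContinuousOn f (Ioc a y)) (hL : Tendsto f (𝓝[>] a) (𝓝 L)) :
    IntegrableOn f (Ioo a y) := by
  rcases le_or_gt y a with hya | hay
  · simp [Ioo_eq_empty_of_le hya]
  -- redefining `f` at `a` as `L` makes it continuous on `[a, y]`
  have hcont : ContinuousOn (Function.update f a L) (Icc a y) := by
    intro x hx
    rcases eq_or_lt_of_le hx.1 with rfl | hax
    · refine continuousWithinAt_update_same.2 (hL.mono_left (nhdsWithin_mono _ ?_))
      rintro u ⟨hu, hua⟩
      exact lt_of_le_of_ne hu.1 (Ne.symm hua)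
    · have hIoc : Ioc a y ∈ 𝓝[Icc a y] x := by
        filter_upwards [self_mem_nhdsWithin, nhdsWithin_le_nhds (Ioi_mem_nhds hax)]
          with u hu hau using ⟨hau, hu.2⟩
      refine ((hf.continuousWithinAt ⟨hax, hx.2⟩).mono_of_mem_nhdsWithin hIoc).congr_of_eventuallyEq
        ?_ (Function.update_of_ne hax.ne' _ _)
      filter_upwards [hIoc] with u hu using Function.update_of_ne hu.1.ne' _ _
  exact (hcont.integrableOn_Icc.mono_set Ioo_subset_Icc_self).congr_fun
    (fun x hx => Function.update_of_ne hx.1.ne' _ _) measurableSet_Ioo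

lemma sDen_pos (μ σ : ℝ → ℝ) (x₀ x : ℝ) : 0 < sDen μ σ x₀ x := Real.exp_pos _

section Diffusion

variable {μ σ : ℝ → ℝ} {x₀ : ℝ}

lemma hasDerivAt_sDen {U : Set ℝ} (hU : IsOpen U) (hU' : U.OrdConnected) (hx₀ : x₀ ∈ U)
    (hr : ContinuousOn (fun y => 2 * μ y / σ y ^ 2) U) {x : ℝ} (hx : x ∈ U) :
    HasDerivAt (sDen μ σ x₀) (-(2 * μ x / σ x ^ 2) * sDen μ σ x₀ x) x := by
  have hF := intervalIntegral.integral_hasDerivAt_right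
    ((hr.mono (hU'.uIcc_subset hx₀ hx)).intervalIntegrable)
    (hr.stronglyMeasurableAtFilter hU x hx) (hr.continuousAt (hU.mem_nhds hx))
  exact hF.neg.exp.congr_deriv (by simp only [sDen, Pi.neg_apply]; ring)

lemma Mab_eq_intervalIntegral {a x : ℝ} (hax : a ≤ x) :
    Mab μ σ x₀ a x = ∫ u in a..x, mDen μ σ x₀ u := by
  rw [Mab, intervalIntegral.integral_of_le hax, integral_Ioc_eq_integral_Ioo]

lemma tendsto_Mab_nhdsGT {a c : ℝ} (hac : a < c)
    (hint : IntegrableOn (mDen μ σ x₀) (Ioo a c)) :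
    Tendsto (Mab μ σ x₀ a) (𝓝[>] a) (𝓝 0) := by
  have hcont := intervalIntegral.continuousOn_primitive_interval'
    ((intervalIntegrable_iff_integrableOn_Ioo_of_le hac.le).2 hint) left_mem_uIcc
  rw [uIcc_of_le hac.le] at hcont
  have h := (hcont a (left_mem_Icc.2 hac.le)).tendsto
  rw [intervalIntegral.integral_same] at h
  refine (h.mono_left ?_).congr' ?_
  · rw [← nhdsWithin_Ioc_eq_nhdsGT hac]
    exact nhdsWithin_mono _ Ioc_subset_Icc_self
  · filter_upwards [self_mem_nhdsWithin] with x hx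
    exact (Mab_eq_intervalIntegral (le_of_lt hx)).symm

lemma hasDerivAt_Mab {U : Set ℝ} (hU : IsOpen U) (hm : ContinuousOn (mDen μ σ x₀) U)
    {a x : ℝ} (hax : a < x) (hx : x ∈ U) (hint : IntegrableOn (mDen μ σ x₀) (Ioo a x)) :
    HasDerivAt (Mab μ σ x₀ a) (mDen μ σ x₀ x) x := by
  refine (intervalIntegral.integral_hasDerivAt_right
    ((intervalIntegrable_iff_integrableOn_Ioo_of_le hax.le).2 hint)
    (hm.stronglyMeasurableAtFilter hU x hx)
    (hm.continuousAt (hU.mem_nhds hx))).congr_of_eventuallyEq ?_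
  filter_upwards [Ioi_mem_nhds hax] with z hz
  exact Mab_eq_intervalIntegral (le_of_lt hz)

lemma tendsto_sDen_mul_Mab {a μa : ℝ}
    (hs : ∀ᶠ x in 𝓝[>] a, HasDerivAt (sDen μ σ x₀) (-(2 * μ x / σ x ^ 2) * sDen μ σ x₀ x) x)
    (hM : ∀ᶠ x in 𝓝[>] a, HasDerivAt (Mab μ σ x₀ a) (mDen μ σ x₀ x) x)
    (hσ : ∀ᶠ x in 𝓝[>] a, σ x ≠ 0) (hM0 : Tendsto (Mab μ σ x₀ a) (𝓝[>] a) (𝓝 0))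
    (hsa : Tendsto (sDen μ σ x₀) (𝓝[>] a) atTop) (hμa : Tendsto μ (𝓝[>] a) (𝓝 μa))
    (hpos : 0 < μa) :
    Tendsto (fun x => sDen μ σ x₀ x * Mab μ σ x₀ a x) (𝓝[>] a) (𝓝 (1 / μa)) := by
  have hμ : ∀ᶠ x in 𝓝[>] a, μ x ≠ 0 :=
    (hμa.eventually (eventually_gt_nhds hpos)).mono fun _ h => h.ne'
  have hinv : ∀ᶠ x in 𝓝[>] a, HasDerivAt (fun z => (sDen μ σ x₀ z)⁻¹)
      (2 * μ x / σ x ^ 2 / sDen μ σ x₀ x) x := by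
    filter_upwards [hs] with x hx
    have := (sDen_pos μ σ x₀ x).ne'
    exact (hx.inv this).congr_deriv (by field_simp)
  have hinv_ne : ∀ᶠ x in 𝓝[>] a, 2 * μ x / σ x ^ 2 / sDen μ σ x₀ x ≠ 0 := by
    filter_upwards [hσ, hμ] with x hσx hμx
    have := (sDen_pos μ σ x₀ x).ne'
    positivity
  have hratio : Tendsto (fun x => mDen μ σ x₀ x / (2 * μ x / σ x ^ 2 / sDen μ σ x₀ x))
      (𝓝[>] a) (𝓝 (1 / μa)) := by
    refine (tendsto_const_nhds.div hμa hpos.ne').congr' ?_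
    filter_upwards [hσ, hμ] with x hσx hμx
    have := (sDen_pos μ σ x₀ x).ne'
    rw [Pi.div_apply, mDen]
    field_simp
  simpa only [div_inv_eq_mul, mul_comm] using
    HasDerivAt.lhopital_zero_nhdsGT hM hinv hinv_ne hM0 hsa.inv_tendsto_atTop hratio

end Diffusion

theorem statement0_general    (a : ℝ) (b : EReal)
    (μ σ : ℝ → ℝ) (x₀ : ℝ) (hx₀ : x₀ ∈ stInt a b)
    (hμcont : ContinuousOn μ (stInt a b)) (hσcont : ContinuousOn σ (stInt a b))
    (hσpos : ∀ x ∈ stInt a b, 0 < (σ x) ^ 2)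
    (hMfin : ∀ x ∈ stInt a b, IntegrableOn (mDen μ σ x₀) (Set.Ioo a x))
    (hsa : Tendsto (sDen μ σ x₀) (𝓝[>] a) atTop)
    (μa : ℝ) (hμa : Tendsto μ (𝓝[>] a) (𝓝 μa))
    :
    0 ≤ μa ∧
    (0 < μa →
      Tendsto (fun x => sDen μ σ x₀ x * Mab μ σ x₀ a x) (𝓝[>] a) (𝓝 (1 / μa)) ∧
      ∀ y ∈ stInt a b,
        IntegrableOn (fun x => Mab μ σ x₀ a x * sDen μ σ x₀ x) (Set.Ioo a y)) := by
  have hI := isOpen_stInt a b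
  have hr : ContinuousOn (fun y => 2 * μ y / σ y ^ 2) (stInt a b) :=
    (continuousOn_const.mul hμcont).div (hσcont.pow 2) fun x hx => (hσpos x hx).ne'
  have hs : ∀ x ∈ stInt a b,
      HasDerivAt (sDen μ σ x₀) (-(2 * μ x / σ x ^ 2) * sDen μ σ x₀ x) x :=
    fun x hx => hasDerivAt_sDen hI (ordConnected_stInt a b) hx₀ hr hx
  have hm : ContinuousOn (mDen μ σ x₀) (stInt a b) :=
    continuousOn_const.div
      ((hσcont.pow 2).mul fun x hx => (hs x hx).continuousAt.continuousWithinAt)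
      fun x hx => (mul_pos (hσpos x hx) (sDen_pos μ σ x₀ x)).ne'
  have hM : ∀ x ∈ stInt a b, HasDerivAt (Mab μ σ x₀ a) (mDen μ σ x₀ x) x :=
    fun x hx => hasDerivAt_Mab hI hm hx.1 hx (hMfin x hx)
  have hnear := stInt_mem_nhdsGT hx₀
  have hμa_nonneg : 0 ≤ μa := by
    by_contra! hneg
    refine not_tendsto_atTop_nhdsGT_of_hasDerivAt_nonneg (eventually_of_mem hnear hs) ?_ hsa
    filter_upwards [hnear, hμa.eventually (eventually_lt_nhds hneg)] with x hx hμx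
    exact mul_nonneg (neg_nonneg.2 (div_nonpos_of_nonpos_of_nonneg (by linarith) (hσpos x hx).le))
      (sDen_pos μ σ x₀ x).le
  refine ⟨hμa_nonneg, fun hpos => ?_⟩
  have hlim := tendsto_sDen_mul_Mab (eventually_of_mem hnear hs) (eventually_of_mem hnear hM)
    (eventually_of_mem hnear fun x hx => by simpa using (hσpos x hx).ne')
    (tendsto_Mab_nhdsGT hx₀.1 (hMfin x₀ hx₀)) hsa hμa hpos
  refine ⟨hlim, fun y hy => integrableOn_Ioo_of_continuousOn_Ioc_of_tendsto ?_
    (hlim.congr fun x => mul_comm _ _)⟩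
  intro x hx
  have hxI := Ioc_subset_stInt hy hx
  exact ((hM x hxI).continuousAt.mul (hs x hxI).continuousAt).continuousWithinAt

theorem statement0    (a : ℝ) (b : EReal) (hab : (a : EReal) < b)
    (μ σ : ℝ → ℝ) (x₀ : ℝ) (hx₀ : x₀ ∈ stInt a b)
    (hμcont : ContinuousOn μ (stInt a b)) (hσcont : ContinuousOn σ (stInt a b))
    (hσpos : ∀ x ∈ stInt a b, 0 < (σ x) ^ 2)
    (hMfin : ∀ x ∈ stInt a b, IntegrableOn (mDen μ σ x₀) (Set.Ioo a x))
    (hsa : Tendsto (sDen μ σ x₀) (𝓝[>] a) atTop)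
    (μa : ℝ) (hμa : Tendsto μ (𝓝[>] a) (𝓝 μa))
    :
    0 ≤ μa ∧
    (0 < μa →
      Tendsto (fun x => sDen μ σ x₀ x * Mab μ σ x₀ a x) (𝓝[>] a) (𝓝 (1 / μa)) ∧
      ∀ y ∈ stInt a b,
        IntegrableOn (fun x => Mab μ σ x₀ a x * sDen μ σ x₀ x) (Set.Ioo a y)) :=
  statement0_general a b μ σ x₀ hx₀ hμcont hσcont hσpos hMfin hsa μa hμa
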